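/- arXiv:1501.05027 — 3 statements merged into one kernel-verified Lean document; each statement's English description precedes it below -/
import Mathlib

section
/- Let T be a triangulated category. Given triangles N₁ → L₁ ⊕ N₂ → L₂ → N₁[1] (with first map having components f₁ : N₁ → L₁ and v : N₁ → N₂, and second map having components u : L₁ → L₂ and g₁ : N₂ → L₂) and M₁ → N₁ ⊕ M₂ → N₂ → M₁[1] (with first map having components f₂ : M₁ → N₁ and w : M₁ → M₂, and second map having components v : N₁ → N₂ and g₂ : M₂ → N₂), there exists a triangle M₁ → L₁ ⊕ M₂ → L₂ → M₁[1]. -/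
open CategoryTheory CategoryTheory.Limits CategoryTheory.Pretriangulated

/-!
Let `K` be a cone of `v`. The octahedron on `v = lift f₁ v ≫ snd` gives a triangle
`L₂ → K → L₁⟦1⟧` whose second map kills `N₂ → K`, and the octahedron on `v = inl ≫ desc v g₂`
gives a triangle `M₂ → K → M₁⟦1⟧` whose first map is `g₂ ≫ (N₂ → K)`. Hence the composite
`M₂ → K → L₁⟦1⟧` vanishes, so its cone is `L₁⟦1⟧ ⊞ M₂⟦1⟧`, and a third octahedron yields
a triangle `M₁⟦1⟧ → (L₁ ⊞ M₂)⟦1⟧ → L₂⟦1⟧`; shifting back by `-1` gives the claim.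
-/

namespace CategoryTheory.Pretriangulated

variable {C : Type*} [Category C] [HasZeroObject C] [Preadditive C] [HasShift C ℤ]
  [∀ n : ℤ, (shiftFunctor C n).Additive] [Pretriangulated C]

lemma exists_distinguished_of_isos (T : Triangle C) (hT : T ∈ distTriang C) {X₁ X₂ X₃ : C}
    (e₁ : T.obj₁ ≅ X₁) (e₂ : T.obj₂ ≅ X₂) (e₃ : T.obj₃ ≅ X₃) :
    ∃ (a : X₁ ⟶ X₂) (b : X₂ ⟶ X₃) (c : X₃ ⟶ X₁⟦(1 : ℤ)⟧), Triangle.mk a b c ∈ distTriang C :=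
  ⟨_, _, _, isomorphic_distinguished _ hT _ <| Iso.symm <|
    Triangle.isoMk T (Triangle.mk (e₁.inv ≫ T.mor₁ ≫ e₂.hom) (e₂.inv ≫ T.mor₂ ≫ e₃.hom)
      (e₃.inv ≫ T.mor₃ ≫ e₁.hom⟦(1 : ℤ)⟧')) e₁ e₂ e₃
      (e₁.hom_inv_id_assoc _).symm (e₂.hom_inv_id_assoc _).symm (e₃.hom_inv_id_assoc _).symm⟩

lemma exists_distinguished_of_isos_shift (T : Triangle C) (hT : T ∈ distTriang C) (n : ℤ)
    {X₁ X₂ X₃ : C} (e₁ : T.obj₁ ≅ X₁⟦n⟧) (e₂ : T.obj₂ ≅ X₂⟦n⟧) (e₃ : T.obj₃ ≅ X₃⟦n⟧) :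
    ∃ (a : X₁ ⟶ X₂) (b : X₂ ⟶ X₃) (c : X₃ ⟶ X₁⟦(1 : ℤ)⟧), Triangle.mk a b c ∈ distTriang C :=
  let unshift (X : C) := (shiftFunctorCompIsoId C n (-n) (add_neg_cancel n)).app X
  exists_distinguished_of_isos _ (Triangle.shift_distinguished T hT (-n))
    ((shiftFunctor C (-n)).mapIso e₁ ≪≫ unshift X₁) ((shiftFunctor C (-n)).mapIso e₂ ≪≫ unshift X₂)
    ((shiftFunctor C (-n)).mapIso e₃ ≪≫ unshift X₃)

lemma exists_distinguished_biprod_of_comp_eq_zero [IsTriangulated C] {X Y Z U V : C}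
    {a : X ⟶ Y} {b : Y ⟶ Z} (hab : a ≫ b = 0) {a₂ : Y ⟶ U} {a₃ : U ⟶ X⟦(1 : ℤ)⟧}
    (ha : Triangle.mk a a₂ a₃ ∈ distTriang C) {b₂ : Z ⟶ V} {b₃ : V ⟶ Y⟦(1 : ℤ)⟧}
    (hb : Triangle.mk b b₂ b₃ ∈ distTriang C) :
    ∃ (c₁ : U ⟶ Z ⊞ X⟦(1 : ℤ)⟧) (c₂ : Z ⊞ X⟦(1 : ℤ)⟧ ⟶ V) (c₃ : V ⟶ U⟦(1 : ℤ)⟧),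
      Triangle.mk c₁ c₂ c₃ ∈ distTriang C := by
  obtain ⟨W, i, j, hW⟩ := distinguished_cocone_triangle (0 : X ⟶ Z)
  obtain ⟨e, -⟩ := exists_iso_binaryBiproduct_of_distTriang _ (rot_of_distTriang _ hW)
    (neg_eq_zero.2 (Functor.map_zero _ _ _))
  exact exists_distinguished_of_isos _ (Triangulated.someOctahedron hab ha hb hW).mem
    (Iso.refl _) e (Iso.refl _)

lemma exists_distinguished_of_biprod_lift [IsTriangulated C] {N₁ N₂ L₁ L₂ K : C}
    {f : N₁ ⟶ L₁} {v : N₁ ⟶ N₂} {β : L₁ ⊞ N₂ ⟶ L₂} {δ : L₂ ⟶ N₁⟦(1 : ℤ)⟧}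
    (h : Triangle.mk (biprod.lift f v) β δ ∈ distTriang C) {p : N₂ ⟶ K} {q : K ⟶ N₁⟦(1 : ℤ)⟧}
    (hv : Triangle.mk v p q ∈ distTriang C) :
    ∃ (b : K ⟶ L₁⟦(1 : ℤ)⟧) (c : L₁⟦(1 : ℤ)⟧ ⟶ L₂⟦(1 : ℤ)⟧) (d : L₂⟦(1 : ℤ)⟧ ⟶ K⟦(1 : ℤ)⟧),
      Triangle.mk b c d ∈ distTriang C ∧ p ≫ b = 0 := by
  let O := Triangulated.someOctahedron (biprod.lift_snd f v) h
    (rot_of_distTriang _ (binaryBiproductTriangle_distinguished L₁ N₂)) hv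
  exact ⟨_, _, _, rot_of_distTriang _ O.mem, O.comm₃⟩

lemma exists_distinguished_of_biprod_desc [IsTriangulated C] {M₁ M₂ N₁ N₂ K : C}
    {α : M₁ ⟶ N₁ ⊞ M₂} {v : N₁ ⟶ N₂} {g : M₂ ⟶ N₂} {δ : N₂ ⟶ M₁⟦(1 : ℤ)⟧}
    (h : Triangle.mk α (biprod.desc v g) δ ∈ distTriang C) {p : N₂ ⟶ K} {q : K ⟶ N₁⟦(1 : ℤ)⟧}
    (hv : Triangle.mk v p q ∈ distTriang C) :
    ∃ (b : K ⟶ M₁⟦(1 : ℤ)⟧) (c : M₁⟦(1 : ℤ)⟧ ⟶ M₂⟦(1 : ℤ)⟧),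
      Triangle.mk (g ≫ p) b c ∈ distTriang C := by
  let O := Triangulated.someOctahedron (biprod.inl_desc v g)
    (binaryBiproductTriangle_distinguished N₁ M₂) (rot_of_distTriang _ h) hv
  have hm₁ : O.m₁ = g ≫ p := by simpa using biprod.inr ≫= O.comm₁
  exact ⟨_, _, hm₁ ▸ O.mem⟩

end CategoryTheory.Pretriangulated

/-- Given triangles `N₁ → L₁ ⊕ N₂ → L₂ → N₁[1]` and `M₁ → N₁ ⊕ M₂ → N₂ → M₁[1]`
sharing the morphism `v : N₁ → N₂`, there exists a triangle
`M₁ → L₁ ⊕ M₂ → L₂ → M₁[1]` (Lemma 4.6 of the paper, via the octahedral axiom). -/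
theorem ladder_of_triangles {C : Type*} [Category C] [HasZeroObject C]
    [Preadditive C] [HasBinaryBiproducts C] [HasShift C ℤ]
    [∀ n : ℤ, (shiftFunctor C n).Additive] [Pretriangulated C] [IsTriangulated C]
    {N₁ N₂ L₁ L₂ M₁ M₂ : C}
    (f₁ : N₁ ⟶ L₁) (v : N₁ ⟶ N₂) (u : L₁ ⟶ L₂) (g₁ : N₂ ⟶ L₂)
    (f₂ : M₁ ⟶ N₁) (w : M₁ ⟶ M₂) (g₂ : M₂ ⟶ N₂)
    (δ₁ : L₂ ⟶ N₁⟦(1 : ℤ)⟧) (δ₂ : N₂ ⟶ M₁⟦(1 : ℤ)⟧)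
    (h₁ : Triangle.mk (biprod.lift f₁ v) (biprod.desc u g₁) δ₁ ∈ distTriang C)
    (h₂ : Triangle.mk (biprod.lift f₂ w) (biprod.desc v g₂) δ₂ ∈ distTriang C) :
    ∃ (a : M₁ ⟶ L₁ ⊞ M₂) (b : L₁ ⊞ M₂ ⟶ L₂) (c : L₂ ⟶ M₁⟦(1 : ℤ)⟧),
      Triangle.mk a b c ∈ distTriang C := by
  obtain ⟨K, p, q, hv⟩ := distinguished_cocone_triangle v
  obtain ⟨_, _, _, hL, hpb⟩ := exists_distinguished_of_biprod_lift h₁ hv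
  obtain ⟨_, _, hM⟩ := exists_distinguished_of_biprod_desc h₂ hv
  obtain ⟨_, _, _, hT⟩ := exists_distinguished_biprod_of_comp_eq_zero
    (by rw [Category.assoc, hpb, comp_zero]) hM hL
  have : PreservesBinaryBiproducts (shiftFunctor C (1 : ℤ)) :=
    preservesBinaryBiproducts_of_preservesBiproducts _
  exact exists_distinguished_of_isos_shift _ hT 1 (Iso.refl _)
    ((shiftFunctor C (1 : ℤ)).mapBiprod L₁ M₂).symm (Iso.refl _)
end

section
/- Let T be a triangulated category in which all hom spaces are finite-dimensional over a field k, and let Z → Y → X →^w Z[1] be a triangle with w ≠ 0 satisfying: every non-split-epimorphism W → X factors through Y → X, and End(X)/rad End(X) ≅ k, End(Z)/rad End(Z) ≅ k. Then for every object U, dim_k Hom(U, X) + dim_k Hom(U, Z) − dim_k Hom(U, Y) = μ(U, X) + μ(U, X[−1]), where μ(U, V) denotes the multiplicity of V as a direct summand of U. -/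
set_option linter.unusedSectionVars false


open CategoryTheory CategoryTheory.Limits Module

noncomputable section

variable {k : Type*} [Field k] {C : Type*} [Category C] [Preadditive C]
  [Linear k C] [HasZeroObject C] [HasFiniteBiproducts C] [HasBinaryBiproducts C]
  [HasShift C ℤ] [∀ n : ℤ, (shiftFunctor C n).Additive] [Pretriangulated C]

/-- The multiplicity `μ(U, V)` of `V` as a direct summand of `U`. -/
def mu (U V : C) : ℕ :=
  sSup {m | ∃ W : C, Nonempty (U ≅ (⨁ fun _ : Fin m => V) ⊞ W)}

namespace ARaux

open CategoryTheory.Pretriangulated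

/-! ### Ring-theoretic lemmas -/

/-- In any (possibly noncommutative) local ring, `a` or `1 - a` is a unit. -/
theorem local_or {R : Type*} [Ring R] [IsLocalRing R] (a : R) :
    IsUnit a ∨ IsUnit (1 - a) :=
  IsLocalRing.isUnit_or_isUnit_of_add_one (a := a) (b := 1 - a) (by abel)

/-- A noncommutative variant of `IsLocalRing.of_isUnit_or_isUnit_one_sub_self`. -/
theorem local_mk {R : Type*} [Ring R] [Nontrivial R]
    (h : ∀ a : R, IsUnit a ∨ IsUnit (1 - a)) : IsLocalRing R :=
  ⟨fun {a b} hab => by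
    have hb : b = 1 - a := by rw [← hab]; abel
    rw [hb]
    exact h a⟩

theorem idem_zero_or_one {R : Type*} [Ring R] [IsLocalRing R] {e : R} (he : e * e = e) :
    e = 0 ∨ e = 1 := by
  rcases local_or e with h | h
  · right
    exact h.mul_left_cancel (by simpa using he)
  · left
    have h2 : (1 - e) * e = (1 - e) * 0 := by
      rw [sub_mul, one_mul, he, sub_self, mul_zero]
    exact h.mul_left_cancel h2


theorem unit_of_mul_eq_one_local {R : Type*} [Ring R] [IsLocalRing R] {a b : R}
    (h : a * b = 1) : IsUnit a ∧ IsUnit b := by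
  have hba : (b * a) * (b * a) = b * a := by
    rw [mul_assoc, ← mul_assoc a b, h, one_mul]
  rcases idem_zero_or_one hba with h0 | h1
  · exfalso
    have hb : b = 0 := by
      have h2 : b * (a * b) = 0 := by rw [← mul_assoc, h0, zero_mul]
      rwa [h, mul_one] at h2
    have : (1 : R) = 0 := by rw [← h, hb, mul_zero]
    exact one_ne_zero this
  · exact ⟨⟨⟨a, b, h, h1⟩, rfl⟩, ⟨⟨b, a, h1, h⟩, rfl⟩⟩

/-- In an object with local endomorphism ring, a one-sided inverse (section) makes a morphism
an isomorphism. -/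
theorem isIso_of_section {A : C} (hloc : IsLocalRing (End A)) {u s : A ⟶ A}
    (h : s ≫ u = 𝟙 A) : IsIso u := by
  haveI := hloc
  have h' : End.of u * End.of s = 1 := h
  exact (isUnit_iff_isIso (X := A) (End.of u)).mp (unit_of_mul_eq_one_local h').1

theorem isIso_of_retraction {A : C} (hloc : IsLocalRing (End A)) {u s : A ⟶ A}
    (h : u ≫ s = 𝟙 A) : IsIso u := by
  haveI := hloc
  have h' : End.of s * End.of u = 1 := h
  exact (isUnit_iff_isIso (X := A) (End.of u)).mp (unit_of_mul_eq_one_local h').2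

/-- A split epimorphism from an object with local endomorphism ring onto an object with
(nontrivial) local endomorphism ring is an isomorphism. -/
theorem isIso_of_splitEpi {V A : C} (hV : IsLocalRing (End V)) (hA : IsLocalRing (End A))
    {u : V ⟶ A} {s : A ⟶ V} (h : s ≫ u = 𝟙 A) : IsIso u := by
  haveI := hV
  have he : End.of (u ≫ s) * End.of (u ≫ s) = End.of (u ≫ s) := by
    show (u ≫ s) ≫ u ≫ s = u ≫ s
    rw [← Category.assoc, Category.assoc u s u, h, Category.comp_id]
  rcases idem_zero_or_one he with h0 | h1
  · exfalso
    haveI := hA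
    have h2 : (𝟙 A : A ⟶ A) = 0 := by
      calc (𝟙 A : A ⟶ A) = (s ≫ u) ≫ s ≫ u := by rw [h, Category.id_comp]
      _ = s ≫ (u ≫ s) ≫ u := by simp only [Category.assoc]
      _ = 0 := by
          have h0' : (u ≫ s : V ⟶ V) = 0 := h0
          rw [h0', zero_comp, comp_zero]
    exact one_ne_zero (α := End A) h2
  · exact ⟨s, (h1 : (u ≫ s : V ⟶ V) = 𝟙 V), h⟩

/-! ### Linear algebra lemmas -/

variable (k)

theorem rank_conj {M M' N N' : Type*} [AddCommGroup M] [Module k M] [AddCommGroup M']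
    [Module k M'] [AddCommGroup N] [Module k N] [AddCommGroup N'] [Module k N']
    (F : M →ₗ[k] N) (F' : M' →ₗ[k] N') (eM : M ≃ₗ[k] M') (eN : N ≃ₗ[k] N')
    (hcomm : ∀ x, F' (eM x) = eN (F x)) :
    finrank k (LinearMap.range F') = finrank k (LinearMap.range F) := by
  have hr : LinearMap.range F' = (LinearMap.range F).map (eN : N →ₗ[k] N') := by
    ext y
    constructor
    · rintro ⟨x, rfl⟩
      refine ⟨F (eM.symm x), ⟨eM.symm x, rfl⟩, ?_⟩
      have h2 := hcomm (eM.symm x)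
      rw [eM.apply_symm_apply] at h2
      exact h2.symm
    · rintro ⟨y', ⟨x, rfl⟩, rfl⟩
      exact ⟨eM x, hcomm x⟩
  rw [hr, LinearEquiv.finrank_map_eq]

theorem finrank_submodule_prod {M N : Type*} [AddCommGroup M] [Module k M] [AddCommGroup N]
    [Module k N] [FiniteDimensional k M] [FiniteDimensional k N]
    (p : Submodule k M) (q : Submodule k N) :
    finrank k (p.prod q) = finrank k p + finrank k q := by
  let e : (p.prod q) ≃ₗ[k] p × q :=
    { toFun := fun x => (⟨(x : M × N).1, (Submodule.mem_prod.mp x.2).1⟩,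
        ⟨(x : M × N).2, (Submodule.mem_prod.mp x.2).2⟩)
      invFun := fun x => ⟨(x.1.1, x.2.1), Submodule.mem_prod.mpr ⟨x.1.2, x.2.2⟩⟩
      map_add' := fun x y => rfl
      map_smul' := fun c x => rfl
      left_inv := fun x => rfl
      right_inv := fun x => rfl }
  rw [e.finrank_eq, Module.finrank_prod]

theorem range_prodMap' {M M' N N' : Type*} [AddCommGroup M] [Module k M] [AddCommGroup M']
    [Module k M'] [AddCommGroup N] [Module k N] [AddCommGroup N'] [Module k N']
    (F : M →ₗ[k] N) (G : M' →ₗ[k] N') :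
    LinearMap.range (F.prodMap G) = (LinearMap.range F).prod (LinearMap.range G) := by
  ext x
  constructor
  · rintro ⟨⟨a, b⟩, rfl⟩
    exact Submodule.mem_prod.mpr ⟨⟨a, rfl⟩, ⟨b, rfl⟩⟩
  · intro hx
    obtain ⟨⟨a, ha⟩, ⟨b, hb⟩⟩ := Submodule.mem_prod.mp hx
    exact ⟨(a, b), by simp [LinearMap.prodMap_apply, ha, hb]⟩

theorem rank_prodMap {M M' N N' : Type*} [AddCommGroup M] [Module k M] [AddCommGroup M']
    [Module k M'] [AddCommGroup N] [Module k N] [AddCommGroup N'] [Module k N']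
    [FiniteDimensional k N] [FiniteDimensional k N']
    (F : M →ₗ[k] N) (G : M' →ₗ[k] N') :
    finrank k (LinearMap.range (F.prodMap G)) =
      finrank k (LinearMap.range F) + finrank k (LinearMap.range G) := by
  rw [range_prodMap', finrank_submodule_prod]

/-! ### Hom-space equivalences -/

/-- Precomposition with an isomorphism as a linear equivalence. -/
def homIsoEquiv {U U' : C} (e : U ≅ U') (A : C) : (U ⟶ A) ≃ₗ[k] (U' ⟶ A) where
  toFun u := e.inv ≫ u
  invFun v := e.hom ≫ v
  map_add' u v := by simp
  map_smul' c u := by simp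
  left_inv u := by simp
  right_inv v := by simp

/-- Maps out of a binary biproduct as a product of hom spaces. -/
def homBiprodEquiv (P Q A : C) : ((P ⊞ Q) ⟶ A) ≃ₗ[k] (P ⟶ A) × (Q ⟶ A) where
  toFun u := (biprod.inl ≫ u, biprod.inr ≫ u)
  invFun p := biprod.desc p.1 p.2
  map_add' u v := by simp [Prod.ext_iff]
  map_smul' c u := by simp [Prod.ext_iff]
  left_inv u := by
    apply biprod.hom_ext' <;> simp
  right_inv p := by simp

/-! ### The rank of post-composition -/

/-- The rank of the linear map `Hom(U, A) → Hom(U, B)` given by postcomposition with `c`. -/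
def rankc (U : C) {A B : C} (c : A ⟶ B) : ℕ :=
  finrank k (LinearMap.range (Linear.rightComp k U c))

theorem rankc_of_iso {U U' A B : C} (e : U ≅ U') (c : A ⟶ B) :
    rankc k U c = rankc k U' c := by
  refine (rank_conj k (Linear.rightComp k U c) (Linear.rightComp k U' c)
    (homIsoEquiv k e A) (homIsoEquiv k e B) ?_).symm
  intro u
  show (e.inv ≫ u) ≫ c = e.inv ≫ u ≫ c
  rw [Category.assoc]

theorem rankc_biprod (P Q : C) {A B : C} (c : A ⟶ B)
    [FiniteDimensional k (P ⟶ B)] [FiniteDimensional k (Q ⟶ B)] :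
    rankc k (P ⊞ Q) c = rankc k P c + rankc k Q c := by
  have h := rank_conj k (Linear.rightComp k (P ⊞ Q) c)
    ((Linear.rightComp k P c).prodMap (Linear.rightComp k Q c))
    (homBiprodEquiv k P Q A) (homBiprodEquiv k P Q B) ?_
  · rw [show rankc k (P ⊞ Q) c = finrank k (LinearMap.range (Linear.rightComp k (P ⊞ Q) c))
      from rfl, ← h, rank_prodMap]
    rfl
  · intro u
    show ((biprod.inl ≫ u) ≫ c, (biprod.inr ≫ u) ≫ c)
      = (biprod.inl ≫ u ≫ c, biprod.inr ≫ u ≫ c)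
    simp [Category.assoc]

theorem rankc_eq_zero {V A B : C} (c : A ⟶ B) (h : ∀ u : V ⟶ A, u ≫ c = 0) :
    rankc k V c = 0 := by
  have hz : Linear.rightComp k V c = 0 := LinearMap.ext fun u => h u
  rw [rankc, hz, LinearMap.range_zero, finrank_bot]

theorem rankc_self_eq_one {A B : C} (c : A ⟶ B) (hc : c ≠ 0)
    (hres : ∀ e : A ⟶ A, ∃ s : k, e ≫ c = s • c) :
    rankc k A c = 1 := by
  have hr : LinearMap.range (Linear.rightComp k A c) = Submodule.span k {c} := by
    apply le_antisymm
    · rintro y ⟨e, rfl⟩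
      obtain ⟨s, hs⟩ := hres e
      show e ≫ c ∈ Submodule.span k {c}
      rw [hs]
      exact Submodule.smul_mem _ _ (Submodule.mem_span_singleton_self c)
    · rw [Submodule.span_le, Set.singleton_subset_iff]
      exact ⟨𝟙 A, by simp⟩
  rw [rankc, hr, finrank_span_singleton hc]

/-! ### Biproduct isomorphisms over `Fin` -/

/-- Splitting off the first summand of a finite biproduct. -/
def finSuccIso {n : ℕ} (f : Fin (n + 1) → C) :
    (⨁ f) ≅ f 0 ⊞ (⨁ fun i : Fin n => f i.succ) where
  hom := biprod.lift (biproduct.π f 0) (biproduct.lift fun i => biproduct.π f i.succ)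
  inv := biprod.desc (biproduct.ι f 0) (biproduct.desc fun i => biproduct.ι f i.succ)
  hom_inv_id := by
    rw [biprod.lift_desc, biproduct.lift_desc, ← biproduct.total, Fin.sum_univ_succ]
  inv_hom_id := by
    apply biprod.hom_ext'
    · rw [biprod.inl_desc_assoc, Category.comp_id]
      apply biprod.hom_ext
      · rw [Category.assoc, biprod.lift_fst, biprod.inl_fst, biproduct.ι_π_self]
      · rw [Category.assoc, biprod.lift_snd, biprod.inl_snd]
        apply biproduct.hom_ext
        intro j
        rw [Category.assoc, biproduct.lift_π, zero_comp]
        exact biproduct.ι_π_ne f (Ne.symm (Fin.succ_ne_zero j))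
    · rw [biprod.inr_desc_assoc, Category.comp_id]
      apply biproduct.hom_ext'
      intro j
      rw [biproduct.ι_desc_assoc]
      apply biprod.hom_ext
      · rw [Category.assoc, biprod.lift_fst, Category.assoc, biprod.inr_fst, comp_zero]
        exact biproduct.ι_π_ne f (Fin.succ_ne_zero j)
      · rw [Category.assoc, biprod.lift_snd, Category.assoc, biprod.inr_snd, Category.comp_id]
        apply biproduct.hom_ext
        intro j'
        rw [Category.assoc, biproduct.lift_π]
        by_cases hjj : j = j'
        · subst hjj
          rw [biproduct.ι_π_self, biproduct.ι_π_self]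
        · rw [biproduct.ι_π_ne _ hjj, biproduct.ι_π_ne f (fun hc => hjj (Fin.succ_inj.mp hc))]

/-- A biproduct over `Fin 0` is a zero summand: `V ≅ (⨁ empty) ⊞ V`. -/
def finZeroIso (g : Fin 0 → C) (V : C) : V ≅ (⨁ g) ⊞ V where
  hom := biprod.lift 0 (𝟙 V)
  inv := biprod.snd
  hom_inv_id := by simp
  inv_hom_id := by
    have hfst : (biprod.fst : (⨁ g) ⊞ V ⟶ (⨁ g)) = 0 :=
      biproduct.hom_ext _ _ (fun j => j.elim0)
    apply biprod.hom_ext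
    · rw [Category.assoc, biprod.lift_fst, comp_zero, Category.id_comp, hfst]
    · simp

theorem rankc_fin (homFinite : ∀ P Q : C, FiniteDimensional k (P ⟶ Q)) :
    ∀ (n : ℕ) (f : Fin n → C) {A B : C} (c : A ⟶ B),
    rankc k (⨁ f) c = ∑ i, rankc k (f i) c := by
  intro n
  induction n with
  | zero =>
      intro f A B c
      rw [Finset.univ_eq_empty, Finset.sum_empty]
      apply rankc_eq_zero
      intro u
      have h1 : (𝟙 (⨁ f) : ⨁ f ⟶ ⨁ f) = 0 := biproduct.hom_ext _ _ (fun j => j.elim0)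
      rw [← Category.id_comp u, h1, zero_comp, zero_comp]
  | succ n ih =>
      intro f A B c
      haveI := homFinite (f 0) B
      haveI := homFinite (⨁ fun i : Fin n => f i.succ) B
      rw [rankc_of_iso k (finSuccIso f) c, rankc_biprod, ih, Fin.sum_univ_succ]

theorem rankc_pow (homFinite : ∀ P Q : C, FiniteDimensional k (P ⟶ Q))
    (m : ℕ) {A B : C} (c : A ⟶ B) (hc : c ≠ 0)
    (hres : ∀ e : A ⟶ A, ∃ s : k, e ≫ c = s • c) :
    rankc k (⨁ fun _ : Fin m => A) c = m := by
  rw [rankc_fin k homFinite m _ c]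
  simp [rankc_self_eq_one k c hc hres]

open Classical in
/-- Existence of a decomposition collecting the summands isomorphic to `A`. -/
theorem exists_decomp {A : C} :
    ∀ (n : ℕ) (f : Fin n → C), ∃ (m : ℕ) (W : C),
      Nonempty ((⨁ f) ≅ (⨁ fun _ : Fin m => A) ⊞ W) ∧
      m = ∑ i, (if Nonempty (f i ≅ A) then 1 else 0) := by
  classical
  intro n
  induction n with
  | zero =>
      intro f
      exact ⟨0, ⨁ f, ⟨finZeroIso _ _⟩, by simp⟩
  | succ n ih =>
      intro f
      obtain ⟨m, W, ⟨e2⟩, hm⟩ := ih (fun i => f i.succ)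
      by_cases hiso : Nonempty (f 0 ≅ A)
      · refine ⟨m + 1, W, ⟨?_⟩, ?_⟩
        · calc (⨁ f) ≅ f 0 ⊞ (⨁ fun i : Fin n => f i.succ) := finSuccIso f
          _ ≅ f 0 ⊞ ((⨁ fun _ : Fin m => A) ⊞ W) := biprod.mapIso (Iso.refl _) e2
          _ ≅ A ⊞ ((⨁ fun _ : Fin m => A) ⊞ W) := biprod.mapIso hiso.some (Iso.refl _)
          _ ≅ (A ⊞ (⨁ fun _ : Fin m => A)) ⊞ W := (biprod.associator _ _ _).symm
          _ ≅ (⨁ fun _ : Fin (m + 1) => A) ⊞ W :=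
              biprod.mapIso (finSuccIso (fun _ : Fin (m + 1) => A)).symm (Iso.refl _)
        · rw [Fin.sum_univ_succ, if_pos hiso, ← hm]
          omega
      · refine ⟨m, f 0 ⊞ W, ⟨?_⟩, ?_⟩
        · calc (⨁ f) ≅ f 0 ⊞ (⨁ fun i : Fin n => f i.succ) := finSuccIso f
          _ ≅ f 0 ⊞ ((⨁ fun _ : Fin m => A) ⊞ W) := biprod.mapIso (Iso.refl _) e2
          _ ≅ (f 0 ⊞ (⨁ fun _ : Fin m => A)) ⊞ W := (biprod.associator _ _ _).symm
          _ ≅ ((⨁ fun _ : Fin m => A) ⊞ f 0) ⊞ W :=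
              biprod.mapIso (biprod.braiding _ _) (Iso.refl _)
          _ ≅ (⨁ fun _ : Fin m => A) ⊞ (f 0 ⊞ W) := biprod.associator _ _ _
        · rw [Fin.sum_univ_succ, if_neg hiso, ← hm]
          omega

/-- The key counting lemma: `mu U A` equals the rank of postcomposition with a morphism `c`
which "detects" split epimorphisms onto `A`. -/
theorem mu_eq_rankc (homFinite : ∀ P Q : C, FiniteDimensional k (P ⟶ Q))
    (hKS : ∀ V : C, ∃ (n : ℕ) (f : Fin n → C),
      (∀ i, IsLocalRing (End (f i))) ∧ Nonempty (V ≅ ⨁ f))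
    {A B : C} (c : A ⟶ B) (hc : c ≠ 0) (hlocA : IsLocalRing (End A))
    (h0 : ∀ (V : C), IsLocalRing (End V) → ∀ u : V ⟶ A,
      (¬∃ s : A ⟶ V, s ≫ u = 𝟙 A) → u ≫ c = 0)
    (hres : ∀ e : A ⟶ A, ∃ s : k, e ≫ c = s • c) (U : C) :
    mu U A = rankc k U c := by
  classical
  obtain ⟨n, F, hFloc, ⟨eU⟩⟩ := hKS U
  have hterm : ∀ i, rankc k (F i) c = if Nonempty (F i ≅ A) then 1 else 0 := by
    intro i
    by_cases hiso : Nonempty (F i ≅ A)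
    · rw [if_pos hiso, rankc_of_iso k hiso.some c, rankc_self_eq_one k c hc hres]
    · rw [if_neg hiso]
      apply rankc_eq_zero
      intro u
      by_cases hsplit : ∃ s : A ⟶ F i, s ≫ u = 𝟙 A
      · exfalso
        obtain ⟨s, hs⟩ := hsplit
        haveI := isIso_of_splitEpi (hFloc i) hlocA hs
        exact hiso ⟨asIso u⟩
      · exact h0 _ (hFloc i) u hsplit
  have hval : rankc k U c = ∑ i, (if Nonempty (F i ≅ A) then 1 else 0) := by
    rw [rankc_of_iso k eU c, rankc_fin k homFinite n F c]
    exact Finset.sum_congr rfl (fun i _ => hterm i)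
  obtain ⟨m, W, ⟨eW⟩, hmval⟩ := exists_decomp (A := A) n F
  have hmem : rankc k U c ∈ {m | ∃ W : C, Nonempty (U ≅ (⨁ fun _ : Fin m => A) ⊞ W)} := by
    have : rankc k U c = m := by rw [hval, hmval]
    rw [this]
    exact ⟨W, ⟨eU.trans eW⟩⟩
  have hub : ∀ m' ∈ {m | ∃ W : C, Nonempty (U ≅ (⨁ fun _ : Fin m => A) ⊞ W)},
      m' ≤ rankc k U c := by
    rintro m' ⟨W', ⟨eW'⟩⟩
    haveI := homFinite (⨁ fun _ : Fin m' => A) B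
    haveI := homFinite W' B
    have h1 : rankc k U c = m' + rankc k W' c := by
      rw [rankc_of_iso k eW' c, rankc_biprod, rankc_pow k homFinite m' c hc hres]
    omega
  exact le_antisymm (csSup_le ⟨_, hmem⟩ hub) (le_csSup ⟨_, hub⟩ hmem)

/-! ### Shift lemmas -/

/-- Transport of locality of endomorphism rings along the shift. -/
theorem locEndShift (X : C) (hloc : IsLocalRing (End X)) :
    IsLocalRing (End (X⟦(-1 : ℤ)⟧)) := by
  haveI := hloc
  set G := shiftFunctor C (1 : ℤ) with hG
  set ε : shiftFunctor C (-1 : ℤ) ⋙ shiftFunctor C (1 : ℤ) ≅ 𝟭 C :=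
    (shiftEquiv C (1 : ℤ)).counitIso with hε
  let ψ : (X⟦(-1 : ℤ)⟧ ⟶ X⟦(-1 : ℤ)⟧) → (X ⟶ X) := fun e =>
    (ε.app X).inv ≫ G.map e ≫ (ε.app X).hom
  have hψiso : ∀ e, IsIso e ↔ IsIso (ψ e) := by
    intro e
    constructor
    · intro he
      dsimp [ψ]
      infer_instance
    · intro he
      have hGe : G.map e = (ε.app X).hom ≫ ψ e ≫ (ε.app X).inv := by
        dsimp [ψ]
        simp
        exact (Category.comp_id _).symm
      have : IsIso (G.map e) := by
        rw [hGe]; infer_instance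
      exact isIso_of_fully_faithful G e
  have hψsub : ∀ a b, ψ (a - b) = ψ a - ψ b := by
    intro a b
    dsimp [ψ]
    rw [Functor.map_sub, Preadditive.sub_comp, Preadditive.comp_sub]
  have hψone : ψ (𝟙 _) = 𝟙 X := by
    dsimp [ψ]; simp
    erw [Category.id_comp]
    exact (ε.app X).inv_hom_id
  have hnt : Nontrivial (End (X⟦(-1 : ℤ)⟧)) := by
    refine ⟨𝟙 _, 0, fun hcon => ?_⟩
    have : ψ (𝟙 _) = ψ 0 := by rw [hcon]
    rw [hψone] at this
    have hz : ψ (0 : X⟦(-1 : ℤ)⟧ ⟶ X⟦(-1 : ℤ)⟧) = 0 := by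
      dsimp [ψ]; rw [Functor.map_zero, zero_comp, comp_zero]
    rw [hz] at this
    exact one_ne_zero (α := End X) this
  haveI := hnt
  apply local_mk
  intro a
  rcases local_or (End.of (ψ a)) with h | h
  · left
    rw [isUnit_iff_isIso] at h ⊢
    exact (hψiso a).mpr h
  · right
    rw [isUnit_iff_isIso] at h ⊢
    have h3 : ψ ((1 - a : End ((shiftFunctor C (-1 : ℤ)).obj X))) =
        ((1 : End X) - End.of (ψ a)) := by
      have h4 := hψsub (𝟙 _) a
      rw [hψone] at h4
      exact h4
    have h5 : IsIso (ψ ((1 - a : End ((shiftFunctor C (-1 : ℤ)).obj X)))) := by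
      rw [h3]; exact h
    exact (hψiso _).mpr h5

/-- Any map to `X⟦-1⟧` which is not a split epimorphism factors through `f⟦-1⟧'`,
given the almost-split property of `f`. -/
theorem factor_shift {Y X : C} (f : Y ⟶ X)
    (hAR : ∀ (W : C) (g' : W ⟶ X), (¬∃ s : X ⟶ W, s ≫ g' = 𝟙 X) →
      ∃ h : W ⟶ Y, h ≫ f = g')
    {U : C} (u : U ⟶ X⟦(-1 : ℤ)⟧)
    (hu : ¬∃ s : X⟦(-1 : ℤ)⟧ ⟶ U, s ≫ u = 𝟙 (X⟦(-1 : ℤ)⟧)) :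
    ∃ h : U ⟶ Y⟦(-1 : ℤ)⟧, u = h ≫ f⟦(-1 : ℤ)⟧' := by
  set G := shiftFunctor C (1 : ℤ) with hG
  set ε : shiftFunctor C (-1 : ℤ) ⋙ shiftFunctor C (1 : ℤ) ≅ 𝟭 C :=
    (shiftEquiv C (1 : ℤ)).counitIso with hε
  set v : G.obj U ⟶ X := G.map u ≫ (ε.app X).hom with hv
  have hv' : ¬∃ s : X ⟶ G.obj U, s ≫ v = 𝟙 X := by
    rintro ⟨s, hs⟩
    apply hu
    refine ⟨G.preimage ((ε.app X).hom ≫ s), ?_⟩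
    apply G.map_injective
    rw [G.map_comp, Functor.map_preimage, G.map_id]
    have h1 : s ≫ G.map u = (ε.app X).inv := by
      rw [← cancel_mono ((ε.app X).hom)]
      rw [Category.assoc, ← hv, hs, Iso.inv_hom_id]
    rw [Category.assoc, h1, Iso.hom_inv_id]
  obtain ⟨h, hh⟩ := hAR (G.obj U) v hv'
  refine ⟨G.preimage (h ≫ (ε.app Y).inv), ?_⟩
  apply G.map_injective
  rw [G.map_comp, Functor.map_preimage]
  have hnat : (ε.app Y).inv ≫ G.map (f⟦(-1 : ℤ)⟧') = f ≫ (ε.app X).inv := by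
    have h2 := ε.inv.naturality f
    dsimp at h2 ⊢
    exact h2.symm
  rw [Category.assoc, hnat, ← Category.assoc, hh, hv, Category.assoc, Iso.hom_inv_id,
    Category.comp_id]

end ARaux

open CategoryTheory.Pretriangulated ARaux

/-- The dimension formula for an Auslander–Reiten triangle `Z → Y → X → Z[1]`:
for every object `U`,
`dim Hom(U,X) + dim Hom(U,Z) - dim Hom(U,Y) = μ(U,X) + μ(U,X[-1])`
(stated additively to avoid truncated subtraction). -/
theorem AR_triangle_dim_formula
    (homFinite : ∀ X Y : C, FiniteDimensional k (X ⟶ Y))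
    (hKS : ∀ X : C, ∃ (n : ℕ) (f : Fin n → C),
      (∀ i, IsLocalRing (End (f i))) ∧ Nonempty (X ≅ ⨁ f))
    {Z Y X : C} (g : Z ⟶ Y) (f : Y ⟶ X) (w : X ⟶ Z⟦(1 : ℤ)⟧)
    (hdist : Pretriangulated.Triangle.mk g f w ∈ distTriang C)
    (hw : w ≠ 0)
    (hXres : IsLocalRing (End X) ∧ ∀ e : X ⟶ X, ∃ c : k, ¬IsUnit (show End X from e - c • 𝟙 X))
    (hZres : IsLocalRing (End Z) ∧ ∀ e : Z ⟶ Z, ∃ c : k, ¬IsUnit (show End Z from e - c • 𝟙 Z))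
    (hAR : ∀ (W : C) (g' : W ⟶ X), (¬∃ s : X ⟶ W, s ≫ g' = 𝟙 X) →
      ∃ h : W ⟶ Y, h ≫ f = g')
    (U : C) :
    finrank k (U ⟶ X) + finrank k (U ⟶ Z) =
      finrank k (U ⟶ Y) + (mu U X + mu U (X⟦(-1 : ℤ)⟧)) := by
  classical
  set T : Pretriangulated.Triangle C := Pretriangulated.Triangle.mk g f w with hTdef
  have hT' : T.invRotate ∈ distTriang C := inv_rot_of_distTriang _ hdist
  have hT'' : T.invRotate.invRotate ∈ distTriang C := inv_rot_of_distTriang _ hT'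
  set δ : (X⟦(-1 : ℤ)⟧) ⟶ Z := T.invRotate.mor₁ with hδdef
  set φ : (Y⟦(-1 : ℤ)⟧) ⟶ (X⟦(-1 : ℤ)⟧) := T.invRotate.invRotate.mor₁ with hφdef
  have hfw : f ≫ w = 0 := comp_distTriang_mor_zero₂₃ _ hdist
  have hgf : g ≫ f = 0 := comp_distTriang_mor_zero₁₂ _ hdist
  have hδg : δ ≫ g = 0 := comp_distTriang_mor_zero₁₂ _ hT'
  have hφδ : φ ≫ δ = 0 := comp_distTriang_mor_zero₁₂ _ hT''
  -- the connecting morphism is nonzero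
  have hδformula : δ = -(w⟦(-1 : ℤ)⟧' ≫ ((shiftEquiv C (1 : ℤ)).unitIso.app Z).inv) := rfl
  have hδ0 : δ ≠ 0 := by
    intro h0
    rw [hδformula, neg_eq_zero] at h0
    have h2 : w⟦(-1 : ℤ)⟧' = 0 := by
      have h3 : w⟦(-1 : ℤ)⟧' =
          (w⟦(-1 : ℤ)⟧' ≫ ((shiftEquiv C (1 : ℤ)).unitIso.app Z).inv) ≫
            ((shiftEquiv C (1 : ℤ)).unitIso.app Z).hom := by
          erw [Category.assoc, Iso.inv_hom_id, Category.comp_id]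
      rw [h3, h0]
      exact zero_comp
    exact hw ((shiftFunctor C (-1 : ℤ)).map_injective (by rw [h2, Functor.map_zero]))
  have hEndX' : IsLocalRing (End (X⟦(-1 : ℤ)⟧)) := ARaux.locEndShift X hXres.1
  -- the formula for φ
  set c1 : X ⟶ ((X⟦(-1 : ℤ)⟧)⟦(1 : ℤ)⟧) := ((shiftEquiv C (1 : ℤ)).counitIso.app X).inv
    with hc1def
  set u1 : (((X⟦(-1 : ℤ)⟧)⟦(1 : ℤ)⟧)⟦(-1 : ℤ)⟧) ⟶ (X⟦(-1 : ℤ)⟧) :=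
    ((shiftEquiv C (1 : ℤ)).unitIso.app (X⟦(-1 : ℤ)⟧)).inv with hu1def
  set θ : (X⟦(-1 : ℤ)⟧) ⟶ (X⟦(-1 : ℤ)⟧) := c1⟦(-1 : ℤ)⟧' ≫ u1 with hθdef
  haveI hθiso : IsIso θ := by
    rw [hθdef, hc1def, hu1def]
    exact (((shiftFunctor C (-1 : ℤ)).mapIso ((shiftEquiv C (1 : ℤ)).counitIso.app X).symm) ≪≫
      ((shiftEquiv C (1 : ℤ)).unitIso.app (X⟦(-1 : ℤ)⟧)).symm).isIso_hom
  have hφformula : φ = -(f⟦(-1 : ℤ)⟧' ≫ θ) := by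
    have h4 : φ = -((f ≫ c1)⟦(-1 : ℤ)⟧' ≫ u1) := rfl
    rw [h4, Functor.map_comp, Category.assoc, hθdef]
  -- the shifted almost split property
  have hA8 : ∀ (U₀ : C) (u : U₀ ⟶ (X⟦(-1 : ℤ)⟧)),
      (¬∃ s : (X⟦(-1 : ℤ)⟧) ⟶ U₀, s ≫ u = 𝟙 (X⟦(-1 : ℤ)⟧)) →
      ∃ h : U₀ ⟶ (Y⟦(-1 : ℤ)⟧), u = h ≫ φ := by
    intro U₀ u hu
    have hu2 : ¬∃ s : (X⟦(-1 : ℤ)⟧) ⟶ U₀,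
        s ≫ (-(u ≫ inv θ)) = 𝟙 (X⟦(-1 : ℤ)⟧) := by
      rintro ⟨s, hs⟩
      apply hu
      rw [Preadditive.comp_neg, neg_eq_iff_eq_neg] at hs
      -- hs : s ≫ u ≫ inv θ = -𝟙 _
      have h2 : s ≫ u = -θ := by
        have h3 := congrArg (fun t => t ≫ θ) hs
        simpa using h3
      refine ⟨(-(inv θ)) ≫ s, ?_⟩
      rw [Category.assoc, h2]
      simp
    obtain ⟨h₀, hh₀⟩ := ARaux.factor_shift f hAR (-(u ≫ inv θ)) hu2
    refine ⟨h₀, ?_⟩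
    have h5 : u ≫ inv θ = -(h₀ ≫ f⟦(-1 : ℤ)⟧') := by
      rw [← hh₀]; simp
    rw [hφformula]
    calc u = (u ≫ inv θ) ≫ θ := by simp
    _ = (-(h₀ ≫ f⟦(-1 : ℤ)⟧')) ≫ θ := by rw [h5]
    _ = h₀ ≫ (-(f⟦(-1 : ℤ)⟧' ≫ θ)) := by
        rw [Preadditive.neg_comp, Category.assoc, ← Preadditive.comp_neg]
  -- postcomposition with δ kills non split epis
  have h0δ : ∀ (V : C), IsLocalRing (End V) → ∀ u : V ⟶ (X⟦(-1 : ℤ)⟧),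
      (¬∃ s : (X⟦(-1 : ℤ)⟧) ⟶ V, s ≫ u = 𝟙 (X⟦(-1 : ℤ)⟧)) → u ≫ δ = 0 := by
    intro V _ u hu
    obtain ⟨h, hh⟩ := hA8 V u hu
    rw [hh, Category.assoc, hφδ, comp_zero]
  -- every endomorphism of X⟦-1⟧ can be pushed through δ
  have halpha : ∀ e : (X⟦(-1 : ℤ)⟧) ⟶ (X⟦(-1 : ℤ)⟧), ∃ t : Z ⟶ Z, e ≫ δ = δ ≫ t := by
    intro e
    by_cases hsp : ∃ s : (X⟦(-1 : ℤ)⟧) ⟶ (Y⟦(-1 : ℤ)⟧),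
      s ≫ (φ ≫ e) = 𝟙 (X⟦(-1 : ℤ)⟧)
    · exfalso
      obtain ⟨s, hs⟩ := hsp
      rw [← Category.assoc] at hs
      haveI hIe : IsIso e := ARaux.isIso_of_section hEndX' hs
      have h6 : s ≫ φ = inv e := by
        rw [← cancel_mono e, IsIso.inv_hom_id]
        exact hs
      have hτ : e ≫ s ≫ φ = 𝟙 (X⟦(-1 : ℤ)⟧) := by
        rw [h6, IsIso.hom_inv_id]
      apply hδ0
      calc δ = (e ≫ s ≫ φ) ≫ δ := by rw [hτ, Category.id_comp]
      _ = (e ≫ s) ≫ (φ ≫ δ) := by simp only [Category.assoc]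
      _ = 0 := by rw [hφδ, comp_zero]
    · obtain ⟨h, hh⟩ := hA8 _ (φ ≫ e) hsp
      have h0' : φ ≫ (e ≫ δ) = 0 := by
        rw [← Category.assoc, hh, Category.assoc, hφδ, comp_zero]
      obtain ⟨t, ht⟩ := Pretriangulated.Triangle.yoneda_exact₂ _ hT'' (e ≫ δ) h0'
      exact ⟨t, ht⟩
  -- postcomposition with δ kills non units of End Z
  have hbeta : ∀ t : Z ⟶ Z, ¬IsIso t → δ ≫ t = 0 := by
    intro t ht
    by_contra hne
    obtain ⟨Q, p, q, hA⟩ := Pretriangulated.distinguished_cocone_triangle (δ ≫ t)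
    have hA1 : (Pretriangulated.Triangle.mk (δ ≫ t) p q).invRotate ∈ distTriang C :=
      inv_rot_of_distTriang _ hA
    set A1 := (Pretriangulated.Triangle.mk (δ ≫ t) p q).invRotate with hA1def
    set ξ : A1.obj₁ ⟶ (X⟦(-1 : ℤ)⟧) := A1.mor₁ with hξdef
    have hξcomp : ξ ≫ (δ ≫ t) = 0 := comp_distTriang_mor_zero₁₂ _ hA1
    by_cases hsp : ∃ σ : (X⟦(-1 : ℤ)⟧) ⟶ A1.obj₁, σ ≫ ξ = 𝟙 (X⟦(-1 : ℤ)⟧)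
    · obtain ⟨σ, hσ⟩ := hsp
      apply hne
      calc δ ≫ t = (σ ≫ ξ) ≫ (δ ≫ t) := by rw [hσ, Category.id_comp]
      _ = σ ≫ (ξ ≫ (δ ≫ t)) := by simp only [Category.assoc]
      _ = 0 := by rw [hξcomp, comp_zero]
    · obtain ⟨h, hh⟩ := hA8 _ ξ hsp
      have hξδ : ξ ≫ δ = 0 := by rw [hh, Category.assoc, hφδ, comp_zero]
      obtain ⟨v, hv0⟩ : ∃ v : Z ⟶ Z, δ = (δ ≫ t) ≫ v :=
        Pretriangulated.Triangle.yoneda_exact₂ _ hA1 δ hξδ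
      have hv : δ = (δ ≫ t) ≫ v := hv0
      have htv : ¬IsIso (t ≫ v) := by
        intro hi
        apply ht
        have h7 : t ≫ (v ≫ inv (t ≫ v)) = 𝟙 Z := by
          rw [← Category.assoc, IsIso.hom_inv_id]
        exact ARaux.isIso_of_retraction hZres.1 h7
      have hunit : IsIso (𝟙 Z - t ≫ v) := by
        haveI := hZres.1
        have hnu : ¬IsUnit (End.of (t ≫ v)) := fun huu =>
          htv ((isUnit_iff_isIso (End.of (t ≫ v))).mp huu)
        have h8 := (ARaux.local_or (End.of (t ≫ v))).resolve_left hnu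
        rw [isUnit_iff_isIso] at h8
        exact h8
      have hz : δ ≫ (𝟙 Z - t ≫ v) = 0 := by
        rw [Preadditive.comp_sub, Category.comp_id, ← Category.assoc, ← hv, sub_self]
      apply hδ0
      have h9 : δ ≫ ((𝟙 Z - t ≫ v) ≫ inv (𝟙 Z - t ≫ v)) = 0 := by
        rw [← Category.assoc, hz, zero_comp]
      rwa [IsIso.hom_inv_id, Category.comp_id] at h9
  -- the residue property for δ
  have hresδ : ∀ e : (X⟦(-1 : ℤ)⟧) ⟶ (X⟦(-1 : ℤ)⟧), ∃ s : k, e ≫ δ = s • δ := by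
    intro e
    obtain ⟨t, ht⟩ := halpha e
    obtain ⟨c, hc⟩ := hZres.2 t
    have hni : ¬IsIso (t - c • 𝟙 Z) := fun hi =>
      hc ((isUnit_iff_isIso (End.of (t - c • 𝟙 Z))).mpr hi)
    have hz := hbeta _ hni
    rw [Preadditive.comp_sub, Linear.comp_smul, Category.comp_id, sub_eq_zero] at hz
    exact ⟨c, by rw [ht, hz]⟩
  -- the residue property for w
  have h0w : ∀ (V : C), IsLocalRing (End V) → ∀ u : V ⟶ X,
      (¬∃ s : X ⟶ V, s ≫ u = 𝟙 X) → u ≫ w = 0 := by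
    intro V _ u hu
    obtain ⟨h, hh⟩ := hAR V u hu
    rw [← hh, Category.assoc, hfw, comp_zero]
  have hresw : ∀ e : X ⟶ X, ∃ s : k, e ≫ w = s • w := by
    intro e
    obtain ⟨c, hc⟩ := hXres.2 e
    have hns : ¬∃ s : X ⟶ X, s ≫ (e - c • 𝟙 X) = 𝟙 X := by
      rintro ⟨s, hs⟩
      exact hc ((isUnit_iff_isIso (End.of (e - c • 𝟙 X))).mpr
        (ARaux.isIso_of_section hXres.1 hs))
    obtain ⟨h, hh⟩ := hAR X _ hns
    have hz : (e - c • 𝟙 X) ≫ w = 0 := by rw [← hh, Category.assoc, hfw, comp_zero]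
    rw [Preadditive.sub_comp, Linear.smul_comp, Category.id_comp, sub_eq_zero] at hz
    exact ⟨c, hz⟩
  -- the two multiplicity computations
  have hmuX : mu U X = ARaux.rankc k U w :=
    ARaux.mu_eq_rankc k homFinite hKS w hw hXres.1 h0w hresw U
  have hmuX' : mu U (X⟦(-1 : ℤ)⟧) = ARaux.rankc k U δ :=
    ARaux.mu_eq_rankc k homFinite hKS δ hδ0 hEndX' h0δ hresδ U
  -- exactness of the Hom sequence
  haveI := homFinite U X
  haveI := homFinite U Y
  haveI := homFinite U Z
  haveI := homFinite U (X⟦(-1 : ℤ)⟧)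
  haveI := homFinite U (Z⟦(1 : ℤ)⟧)
  have hkb : LinearMap.ker (Linear.rightComp k U g) =
      LinearMap.range (Linear.rightComp k U δ) := by
    ext u
    simp only [LinearMap.mem_ker, LinearMap.mem_range, Linear.rightComp_apply]
    constructor
    · intro hu
      obtain ⟨v, hv⟩ := Pretriangulated.Triangle.coyoneda_exact₂ _ hT' u hu
      exact ⟨v, hv.symm⟩
    · rintro ⟨v, rfl⟩
      rw [Category.assoc, hδg, comp_zero]
  have hkc : LinearMap.ker (Linear.rightComp k U f) =
      LinearMap.range (Linear.rightComp k U g) := by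
    ext u
    simp only [LinearMap.mem_ker, LinearMap.mem_range, Linear.rightComp_apply]
    constructor
    · intro hu
      obtain ⟨v, hv⟩ := Pretriangulated.Triangle.coyoneda_exact₂ _ hdist u hu
      exact ⟨v, hv.symm⟩
    · rintro ⟨v, rfl⟩
      rw [Category.assoc, hgf, comp_zero]
  have hkd : LinearMap.ker (Linear.rightComp k U w) =
      LinearMap.range (Linear.rightComp k U f) := by
    ext u
    simp only [LinearMap.mem_ker, LinearMap.mem_range, Linear.rightComp_apply]
    constructor
    · intro hu
      obtain ⟨v, hv⟩ := Pretriangulated.Triangle.coyoneda_exact₃ _ hdist u hu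
      exact ⟨v, hv.symm⟩
    · rintro ⟨v, rfl⟩
      rw [Category.assoc, hfw, comp_zero]
  have e1 := LinearMap.finrank_range_add_finrank_ker (Linear.rightComp k U g)
  have e2 := LinearMap.finrank_range_add_finrank_ker (Linear.rightComp k U f)
  have e3 := LinearMap.finrank_range_add_finrank_ker (Linear.rightComp k U w)
  rw [hkb] at e1
  rw [hkc] at e2
  rw [hkd] at e3
  rw [hmuX, hmuX']
  unfold ARaux.rankc
  omega

end
end

section
/- Let T be a Hom-finite k-linear Krull–Schmidt triangulated category admitting AR triangles, and suppose that for some indecomposable object X there is an isomorphism X ≅ τX, where τX is the starting term of the AR triangle τX → E → X → τX[1]. Assume additionally that [X] + [τX] − [E] = [X[−1]] + [τX[−1]] − [E[−1]] in the free abelian group on isomorphism classes of indecomposables. Then X ≅ X[−1]. -/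
/-!
Fix `X` with `End X` local and put `δ(M) = dim Hom(X, M) / rad(X, M)`, where `rad(X, M)` consists
of the maps `u` with `u ≫ v` never invertible. Then `δ` is additive on biproducts, equals `δ(X) > 0`
on objects isomorphic to `X` and vanishes on the other objects with local endomorphism ring, so it
counts the copies of `X` in a Krull–Schmidt decomposition, weighted by `δ(X)`.

If `X ≇ X[-1]`, then (∗) and `τX ≅ X` give `δ(E) ≥ 2 δ(X)`, so the count puts two copies of `X`
into `E` and `dim Hom(X, E) ≥ 2 dim Hom(X, X)`. On the other hand `w ≠ 0` means that `f` is not a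
split epimorphism, so `u ↦ u ≫ f` maps `Hom(X, E)` into `rad(X, X)` with kernel covered by
`Hom(X, τX)`; hence `dim Hom(X, E) ≤ dim Hom(X, X) + dim rad(X, X) < 2 dim Hom(X, X)`.
-/

open CategoryTheory CategoryTheory.Limits Module

noncomputable section

namespace IsLocalRing

variable {R : Type*} [Ring R] [IsLocalRing R]

theorem eq_zero_or_one_of_isIdempotentElem {e : R} (he : IsIdempotentElem e) :
    e = 0 ∨ e = 1 := by
  rcases isUnit_or_isUnit_of_add_one (add_sub_cancel e 1) with h | h
  · exact .inr ((IsIdempotentElem.iff_eq_one_of_isUnit h).1 he)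
  · exact .inl (sub_eq_self.1 ((IsIdempotentElem.iff_eq_one_of_isUnit h).1 he.one_sub))

instance : IsDedekindFiniteMonoid R where
  mul_eq_one_symm {a b} hab := by
    have hba : IsIdempotentElem (b * a) := by
      rw [IsIdempotentElem, mul_assoc, ← mul_assoc a, hab, one_mul]
    refine (eq_zero_or_one_of_isIdempotentElem hba).resolve_left fun h0 => one_ne_zero (α := R) ?_
    rw [← hab, ← one_mul a, ← hab, mul_assoc, mul_assoc, ← mul_assoc b, h0, zero_mul, mul_zero]

end IsLocalRing

namespace CategoryTheory

variable {C : Type*} [Category C] [Preadditive C]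

theorem Functor.isLocalRing_end_obj {D : Type*} [Category D] [Preadditive D] (F : C ⥤ D)
    [F.Additive] [F.Full] [F.Faithful] (X : C) [IsLocalRing (End X)] :
    IsLocalRing (End (F.obj X)) :=
  let e : End X ≃+* End (F.obj X) :=
    { (Functor.FullyFaithful.ofFullyFaithful F).mulEquivEnd X with
      map_add' := fun _ _ => F.map_add }
  RingHom.domain_isLocalRing (e.symm : End (F.obj X) →+* End X)

theorem nonempty_iso_of_isIso_comp {X M : C} [IsLocalRing (End X)] [IsLocalRing (End M)]
    (u : X ⟶ M) (v : M ⟶ X) [IsIso (u ≫ v)] : Nonempty (X ≅ M) := by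
  set r := v ≫ inv (u ≫ v)
  have hur : u ≫ r = 𝟙 X := by rw [← Category.assoc]; exact IsIso.hom_inv_id _
  let p : End M := r ≫ u
  have hp : IsIdempotentElem p := by
    change (r ≫ u) ≫ r ≫ u = r ≫ u
    simp [reassoc_of% hur]
  rcases IsLocalRing.eq_zero_or_one_of_isIdempotentElem hp with h0 | h1
  · refine absurd ?_ (one_ne_zero (α := End X))
    calc 𝟙 X = (u ≫ r) ≫ u ≫ r := by rw [hur, Category.id_comp]
      _ = u ≫ p ≫ r := by simp [p]
      _ = 0 := by rw [h0]; exact (u ≫= zero_comp).trans comp_zero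
  · exact ⟨⟨u, r, hur, h1⟩⟩

section Radical

variable (k : Type*) [CommSemiring k] [Linear k C]

def radicalHom (X M : C) [IsLocalRing (End X)] : Submodule k (X ⟶ M) where
  carrier := {u | ∀ v : M ⟶ X, ¬IsIso (u ≫ v)}
  zero_mem' v := by
    rw [zero_comp, ← isUnit_iff_isIso]
    exact not_isUnit_zero
  add_mem' {a b} ha hb v := by
    rw [Preadditive.add_comp, ← isUnit_iff_isIso]
    exact IsLocalRing.nonunits_add ((isUnit_iff_isIso _).not.2 (ha v))
      ((isUnit_iff_isIso _).not.2 (hb v))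
  smul_mem' c u hu v := by
    rw [Linear.smul_comp, ← isUnit_iff_isIso]
    refine fun h => hu v ((isUnit_iff_isIso _).1
      (isUnit_of_mul_isUnit_right (x := (c • 1 : End X)) ?_))
    rwa [smul_one_mul]

variable {k}
variable {X M N : C} [IsLocalRing (End X)]

theorem comp_mem_radicalHom {u : X ⟶ M} (hu : u ∈ radicalHom k X M) (a : M ⟶ N) :
    u ≫ a ∈ radicalHom k X N := fun v => by
  simpa using hu (a ≫ v)

theorem mem_radicalHom_self {u : X ⟶ X} : u ∈ radicalHom k X X ↔ ¬IsIso u := by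
  refine ⟨fun hu => by simpa using hu (𝟙 X), fun hu v huv => hu ?_⟩
  rw [← isUnit_iff_isIso] at huv ⊢
  exact isUnit_of_mul_isUnit_right (x := (show End X from v)) (y := (show End X from u)) huv

theorem radicalHom_eq_top [IsLocalRing (End M)] (h : ¬Nonempty (X ≅ M)) :
    radicalHom k X M = ⊤ :=
  eq_top_iff.2 fun u _ v _ => h (nonempty_iso_of_isIso_comp u v)

theorem map_radicalHom_homCongr (i : M ≅ N) :
    (radicalHom k X M).map (Linear.homCongr k (Iso.refl X) i).toLinearMap =
      radicalHom k X N := by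
  refine le_antisymm (Submodule.map_le_iff_le_comap.2 fun u hu => ?_) fun u hu => ?_
  · simpa [Linear.homCongr_apply] using comp_mem_radicalHom hu i.hom
  · exact ⟨u ≫ i.inv, comp_mem_radicalHom hu i.inv, by simp [Linear.homCongr_apply]⟩

end Radical

section Bicone

variable (k : Type*) [CommSemiring k] [Linear k C] {J : Type*} [Fintype J] {F : J → C}
  {b : Limits.Bicone F}

def Limits.Bicone.IsBilimit.homLinearEquiv (hb : b.IsBilimit) (X : C) :
    (X ⟶ b.pt) ≃ₗ[k] ((j : J) → X ⟶ F j) where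
  toFun u j := u ≫ b.π j
  invFun g := ∑ j, g j ≫ b.ι j
  left_inv u := by
    simp only [Category.assoc, ← Preadditive.comp_sum, IsBilimit.total hb, Category.comp_id]
  right_inv g := by classical ext j; simp [Preadditive.sum_comp, b.ι_π, comp_dite]
  map_add' u v := by ext j; simp
  map_smul' c u := by ext j; simp

variable {k}

theorem mem_radicalHom_bicone_iff (hb : b.IsBilimit) {X : C} [IsLocalRing (End X)]
    (u : X ⟶ b.pt) : u ∈ radicalHom k X b.pt ↔ ∀ j, u ≫ b.π j ∈ radicalHom k X (F j) := by
  refine ⟨fun hu j => comp_mem_radicalHom hu _, fun hu v huv => ?_⟩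
  have hsum : u ≫ v = ∑ j, (u ≫ b.π j) ≫ b.ι j ≫ v := by
    conv_lhs => rw [← Category.id_comp v, ← IsBilimit.total hb]
    simp only [Preadditive.sum_comp, Preadditive.comp_sum, Category.assoc]
  rw [← isUnit_iff_isIso, hsum] at huv
  obtain ⟨j, -, hj⟩ := IsLocalRing.exists_of_isUnit_sum huv
  exact hu j _ ((isUnit_iff_isIso _).1 hj)

end Bicone

section Finrank

variable (k : Type*) [Field k] [Linear k C]

def finrankHomModRadical (X M : C) [IsLocalRing (End X)] : ℕ :=
  finrank k ((X ⟶ M) ⧸ radicalHom k X M)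

variable {k} {X M N : C} [IsLocalRing (End X)]

theorem finrank_hom_congr (A : C) (i : M ≅ N) : finrank k (A ⟶ M) = finrank k (A ⟶ N) :=
  (Linear.homCongr k (Iso.refl A) i).finrank_eq

theorem finrankHomModRadical_congr (i : M ≅ N) :
    finrankHomModRadical k X M = finrankHomModRadical k X N :=
  (Submodule.Quotient.equiv _ _ _ (map_radicalHom_homCongr i)).finrank_eq

variable [∀ A B : C, FiniteDimensional k (A ⟶ B)]

theorem finrankHomModRadical_add_finrank_radicalHom :
    finrankHomModRadical k X M + finrank k (radicalHom k X M) = finrank k (X ⟶ M) :=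
  Submodule.finrank_quotient_add_finrank _

theorem finrankHomModRadical_self_pos : 0 < finrankHomModRadical k X X := by
  have hlt := Submodule.finrank_lt (s := radicalHom k X X) fun htop =>
    mem_radicalHom_self.1 (htop ▸ Submodule.mem_top : 𝟙 X ∈ radicalHom k X X) inferInstance
  have := finrankHomModRadical_add_finrank_radicalHom (k := k) (X := X) (M := X)
  omega

theorem finrankHomModRadical_eq_zero [IsLocalRing (End M)] (h : ¬Nonempty (X ≅ M)) :
    finrankHomModRadical k X M = 0 := by
  have := finrankHomModRadical_add_finrank_radicalHom (k := k) (X := X) (M := M)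
  rw [radicalHom_eq_top h, finrank_top] at this
  omega

variable {J : Type*} [Fintype J] {F : J → C} {b : Limits.Bicone F}

theorem finrank_hom_bicone (hb : b.IsBilimit) (A : C) :
    finrank k (A ⟶ b.pt) = ∑ j, finrank k (A ⟶ F j) :=
  (hb.homLinearEquiv k A).finrank_eq.trans (Module.finrank_pi_fintype k)

theorem finrankHomModRadical_bicone (hb : b.IsBilimit) :
    finrankHomModRadical k X b.pt = ∑ j, finrankHomModRadical k X (F j) := by
  set Φ := LinearMap.piMap (fun j => (radicalHom k X (F j)).mkQ) ∘ₗ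
    (hb.homLinearEquiv k X).toLinearMap
  have hker : LinearMap.ker Φ = radicalHom k X b.pt := by
    ext u
    simp [Φ, mem_radicalHom_bicone_iff hb, funext_iff, Limits.Bicone.IsBilimit.homLinearEquiv]
  have hsurj : Function.Surjective Φ :=
    (Function.Surjective.piMap fun j => Submodule.mkQ_surjective _).comp
      (hb.homLinearEquiv k X).surjective
  calc finrankHomModRadical k X b.pt = finrank k ((X ⟶ b.pt) ⧸ LinearMap.ker Φ) := by
        rw [hker]; rfl
    _ = ∑ j, finrankHomModRadical k X (F j) :=
        (Φ.quotKerEquivOfSurjective hsurj).finrank_eq.trans (Module.finrank_pi_fintype k)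

theorem finrank_hom_biprod (A M N : C) [HasBinaryBiproduct M N] :
    finrank k (A ⟶ M ⊞ N) = finrank k (A ⟶ M) + finrank k (A ⟶ N) :=
  (finrank_hom_bicone ((BinaryBicone.toBiconeIsBilimit _).symm
    (BinaryBiproduct.isBilimit M N)) A).trans (Finset.sum_pair (by simp))

theorem finrankHomModRadical_biprod (M N : C) [HasBinaryBiproduct M N] :
    finrankHomModRadical k X (M ⊞ N) = finrankHomModRadical k X M + finrankHomModRadical k X N :=
  (finrankHomModRadical_bicone ((BinaryBicone.toBiconeIsBilimit _).symm
    (BinaryBiproduct.isBilimit M N))).trans (Finset.sum_pair (by simp))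

theorem finrankHomModRadical_mul_le_of_isLocalRing [IsLocalRing (End M)] :
    finrankHomModRadical k X M * finrank k (X ⟶ X) ≤
      finrank k (X ⟶ M) * finrankHomModRadical k X X := by
  by_cases h : Nonempty (X ≅ M)
  · obtain ⟨i⟩ := h
    rw [← finrankHomModRadical_congr i, ← finrank_hom_congr X i, mul_comm]
  · rw [finrankHomModRadical_eq_zero h, zero_mul]
    exact Nat.zero_le _

theorem finrankHomModRadical_biproduct_mul_le (F : J → C) [HasBiproduct F]
    [∀ j, IsLocalRing (End (F j))] :
    finrankHomModRadical k X (⨁ F) * finrank k (X ⟶ X) ≤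
      finrank k (X ⟶ ⨁ F) * finrankHomModRadical k X X := by
  rw [finrankHomModRadical_bicone (biproduct.isBilimit F), finrank_hom_bicone
    (biproduct.isBilimit F), Finset.sum_mul, Finset.sum_mul]
  exact Finset.sum_le_sum fun j _ => finrankHomModRadical_mul_le_of_isLocalRing

end Finrank

section Pretriangulated

variable {k : Type*} [Field k] [Linear k C] [∀ A B : C, FiniteDimensional k (A ⟶ B)]
  [HasZeroObject C] [HasShift C ℤ] [∀ n : ℤ, (shiftFunctor C n).Additive] [Pretriangulated C]

theorem finrank_hom_le_of_distTriang {T E X : C} [IsLocalRing (End X)] {g : T ⟶ E}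
    {f : E ⟶ X} {w : X ⟶ T⟦(1 : ℤ)⟧} (hdist : Pretriangulated.Triangle.mk g f w ∈ distTriang C)
    (hw : w ≠ 0) :
    finrank k (X ⟶ E) ≤ finrank k (X ⟶ T) + finrank k (radicalHom k X X) := by
  set φ := Linear.rightComp k X f
  have hrange : LinearMap.range φ ≤ radicalHom k X X := by
    rintro _ ⟨u, rfl⟩
    refine mem_radicalHom_self.2 fun (_ : IsIso (u ≫ f)) => hw ?_
    exact Pretriangulated.Triangle.mor₃_eq_zero_of_epi₂ _ hdist (epi_of_epi u f)
  have hker : LinearMap.ker φ ≤ LinearMap.range (Linear.rightComp k X g) := fun u hu => by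
    obtain ⟨t, rfl⟩ := Pretriangulated.Triangle.coyoneda_exact₂ _ hdist u hu
    exact ⟨t, rfl⟩
  have := φ.finrank_range_add_finrank_ker
  have := Submodule.finrank_mono hrange
  have := (Submodule.finrank_mono hker).trans (LinearMap.finrank_range_le _)
  omega

end Pretriangulated

end CategoryTheory

variable {k : Type*} [Field k] {C : Type*} [Category C] [Preadditive C]
  [Linear k C] [HasZeroObject C] [HasFiniteBiproducts C] [HasBinaryBiproducts C]
  [HasShift C ℤ] [∀ n : ℤ, (shiftFunctor C n).Additive] [Pretriangulated C]

theorem two_periodicity_of_tau_fixed_general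
    (homFinite : ∀ X Y : C, FiniteDimensional k (X ⟶ Y))
    (hKS : ∀ X : C, ∃ (n : ℕ) (f : Fin n → C),
      (∀ i, IsLocalRing (End (f i))) ∧ Nonempty (X ≅ ⨁ f))
    {T E X : C} (g : T ⟶ E) (f : E ⟶ X) (w : X ⟶ T⟦(1 : ℤ)⟧)
    (hdist : Pretriangulated.Triangle.mk g f w ∈ distTriang C)
    (hw : w ≠ 0)
    (hXres : IsLocalRing (End X))
    (hstar : Nonempty (X ⊞ T ⊞ E⟦(-1 : ℤ)⟧ ≅ X⟦(-1 : ℤ)⟧ ⊞ T⟦(-1 : ℤ)⟧ ⊞ E))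
    (htau : Nonempty (X ≅ T)) :
    Nonempty (X ≅ X⟦(-1 : ℤ)⟧) := by
  by_contra hne
  obtain ⟨eT⟩ := htau
  obtain ⟨eStar⟩ := hstar
  obtain ⟨n, F, hF, ⟨eE⟩⟩ := hKS E
  have : IsLocalRing (End (X⟦(-1 : ℤ)⟧)) := (shiftFunctor C (-1 : ℤ)).isLocalRing_end_obj X
  have hpos : 0 < finrankHomModRadical k X X := finrankHomModRadical_self_pos
  have hE : finrank k (X ⟶ E) + finrankHomModRadical k X X ≤ 2 * finrank k (X ⟶ X) := by
    have hAR := finrank_hom_le_of_distTriang (k := k) hdist hw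
    have hrad := finrankHomModRadical_add_finrank_radicalHom (k := k) (X := X) (M := X)
    rw [← finrank_hom_congr X eT] at hAR
    omega
  have hKSE : finrankHomModRadical k X E * finrank k (X ⟶ X) ≤
      finrank k (X ⟶ E) * finrankHomModRadical k X X := by
    rw [finrankHomModRadical_congr eE, finrank_hom_congr X eE]
    exact finrankHomModRadical_biproduct_mul_le F
  have hstarE : 2 * finrankHomModRadical k X X ≤ finrankHomModRadical k X E := by
    have := finrankHomModRadical_congr (k := k) (X := X) eStar
    simp only [finrankHomModRadical_biprod] at this
    rw [← finrankHomModRadical_congr eT, finrankHomModRadical_eq_zero hne,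
      finrankHomModRadical_congr ((shiftFunctor C (-1 : ℤ)).mapIso eT.symm),
      finrankHomModRadical_eq_zero hne] at this
    omega
  nlinarith [Nat.mul_le_mul_right (finrank k (X ⟶ X)) hstarE,
    Nat.mul_le_mul_right (finrankHomModRadical k X X) hE]

/-- Remark 3.3(2): if `X` is indecomposable with an AR triangle
`τX → E → X → τX[1]` satisfying the shift-invariance condition (∗)
(expressed, via the Krull–Schmidt property, as an isomorphism
`X ⊕ τX ⊕ E[-1] ≅ X[-1] ⊕ τX[-1] ⊕ E`), and `X ≅ τX`, then `X ≅ X[-1]`. -/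
theorem two_periodicity_of_tau_fixed
    (homFinite : ∀ X Y : C, FiniteDimensional k (X ⟶ Y))
    (hKS : ∀ X : C, ∃ (n : ℕ) (f : Fin n → C),
      (∀ i, IsLocalRing (End (f i))) ∧ Nonempty (X ≅ ⨁ f))
    {T E X : C} (g : T ⟶ E) (f : E ⟶ X) (w : X ⟶ T⟦(1 : ℤ)⟧)
    (hdist : Pretriangulated.Triangle.mk g f w ∈ distTriang C)
    (hw : w ≠ 0)
    (hXind : Indecomposable X) (hTind : Indecomposable T)
    (hXres : IsLocalRing (End X)) (hTres : IsLocalRing (End T))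
    (hAR : ∀ (W : C) (g' : W ⟶ X), (¬∃ s : X ⟶ W, s ≫ g' = 𝟙 X) →
      ∃ h : W ⟶ E, h ≫ f = g')
    (hstar : Nonempty (X ⊞ T ⊞ E⟦(-1 : ℤ)⟧ ≅ X⟦(-1 : ℤ)⟧ ⊞ T⟦(-1 : ℤ)⟧ ⊞ E))
    (htau : Nonempty (X ≅ T)) :
    Nonempty (X ≅ X⟦(-1 : ℤ)⟧) :=
  two_periodicity_of_tau_fixed_general homFinite hKS g f w hdist hw hXres hstar htau

end
end
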